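/- Let G=(V,E) be a connected, locally finite graph. The physical Laplacian Δ_m : C_c(V) → ℓ²(V) is essentially self-adjoint, i.e. it has a unique self-adjoint extension. -/

import Mathlib

open scoped BigOperators

section

variable {V : Type*} (G : SimpleGraph V) [G.LocallyFinite]

/-- The physical Laplacian of a locally finite graph:
`Δ f x = ∑_{y ∼ x} (f x - f y) = m x * f x - ∑_{y ∼ x} f y`. -/
noncomputable def graphLap (f : V → ℂ) (x : V) : ℂ :=
  ∑ y ∈ G.neighborFinset x, (f x - f y)

theorem graphLap_add (f g : V → ℂ) :
    graphLap G (f + g) = graphLap G f + graphLap G g := by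
  funext x
  simp only [graphLap, Pi.add_apply, ← Finset.sum_add_distrib]
  exact Finset.sum_congr rfl fun y _ => by ring

theorem graphLap_smul (c : ℂ) (f : V → ℂ) :
    graphLap G (c • f) = c • graphLap G f := by
  funext x
  simp only [graphLap, Pi.smul_apply, smul_eq_mul, Finset.mul_sum]
  exact Finset.sum_congr rfl fun y _ => by ring

/-- The Laplacian of a finitely supported function is finitely supported. -/
theorem graphLap_support_finite {f : V → ℂ} (hf : (Function.support f).Finite) :
    (Function.support (graphLap G f)).Finite := by
  classical
  have hsub : Function.support (graphLap G f) ⊆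
      Function.support f ∪ ⋃ y ∈ hf.toFinset, (G.neighborFinset y : Set V) := by
    intro x hx
    by_cases hfx : f x = 0
    · have hex : ∃ y ∈ G.neighborFinset x, f y ≠ 0 := by
        by_contra h
        push_neg at h
        apply hx
        simp only [graphLap, hfx]
        exact Finset.sum_eq_zero fun y hy => by rw [h y hy]; ring
      obtain ⟨y, hy, hfy⟩ := hex
      refine Set.mem_union_right _ (Set.mem_iUnion₂.mpr ⟨y, ?_, ?_⟩)
      · simpa [Set.Finite.mem_toFinset] using hfy
      · exact Finset.mem_coe.mpr ((SimpleGraph.mem_neighborFinset _ _ _).mpr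
          (G.adj_symm ((SimpleGraph.mem_neighborFinset _ _ _).mp hy)))
    · exact Set.mem_union_left _ hfx
  exact Set.Finite.subset (hf.union (Set.Finite.biUnion hf.toFinset.finite_toSet
    fun y _ => (G.neighborFinset y).finite_toSet)) hsub

/-- The subspace `C_c(V)` of finitely supported elements of `ℓ²(V)`. -/
noncomputable def ccSubmodule (V : Type*) : Submodule ℂ (lp (fun _ : V => ℂ) 2) where
  carrier := {f | (Function.support (f : V → ℂ)).Finite}
  add_mem' := fun hf hg =>
    Set.Finite.subset (hf.union hg) (Function.support_add _ _)
  zero_mem' := by simp [Function.support]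
  smul_mem' := fun c f hf =>
    Set.Finite.subset hf (by
      simpa using Function.support_const_smul_subset c (f : V → ℂ))

/-- The minimal physical Laplacian `Δ_m : C_c(V) → ℓ²(V)` as a densely defined
unbounded operator on the Hilbert space `ℓ²(V)`. -/
noncomputable def minimalLaplacian : lp (fun _ : V => ℂ) 2 →ₗ.[ℂ] lp (fun _ : V => ℂ) 2 where
  domain := ccSubmodule V
  toFun :=
    { toFun := fun f => ⟨graphLap G (f : V → ℂ),
        (memℓp_zero (graphLap_support_finite G f.2)).of_exponent_ge (by norm_num)⟩
      map_add' := by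
        intro f g
        ext x
        have h : ((↑↑(f + g) : V → ℂ)) = ((f : lp (fun _ : V => ℂ) 2) : V → ℂ)
            + ((g : lp (fun _ : V => ℂ) 2) : V → ℂ) := rfl
        simp only [h, graphLap_add]
        rfl
      map_smul' := by
        intro c f
        ext x
        have h : ((↑↑(c • f) : V → ℂ)) = c • ((f : lp (fun _ : V => ℂ) 2) : V → ℂ) := rfl
        simp only [h, graphLap_smul]
        rfl }


section aux
lemma graphLap_conj (w : V → ℂ) (x : V) :
    graphLap G (fun y => (starRingEnd ℂ) (w y)) x = (starRingEnd ℂ) (graphLap G w x) := by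
  simp [graphLap, map_sum]

lemma green_finset (a b : V → ℂ) (s : Finset V)
    (h1 : ∀ x, b x ≠ 0 → x ∈ s)
    (h2 : ∀ x, b x ≠ 0 → ∀ y ∈ G.neighborFinset x, y ∈ s) :
    ∑ x ∈ s, graphLap G a x * b x = ∑ x ∈ s, a x * graphLap G b x := by
  classical
  have L : ∀ x, graphLap G a x * b x
      = ∑ y ∈ G.neighborFinset x, (a x * b x - a y * b x) := by
    intro x; simp [graphLap, Finset.sum_mul, sub_mul]; ring
  have R : ∀ x, a x * graphLap G b x
      = ∑ y ∈ G.neighborFinset x, (a x * b x - a x * b y) := by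
    intro x; simp [graphLap, Finset.mul_sum, mul_sub]; ring
  simp only [L, R, Finset.sum_sub_distrib]
  congr 1
  have hB : ∑ x ∈ s, ∑ y ∈ G.neighborFinset x, a y * b x
      = ∑ x ∈ s, ∑ y ∈ s, (if G.Adj x y then a y * b x else 0) := by
    refine Finset.sum_congr rfl fun x _ => ?_
    rw [Finset.sum_ite, Finset.sum_const_zero, add_zero]
    by_cases hbx : b x = 0
    · simp [hbx]
    · have : s.filter (fun y => G.Adj x y) = G.neighborFinset x := by
        ext y
        simp only [Finset.mem_filter, SimpleGraph.mem_neighborFinset]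
        exact ⟨fun h => h.2, fun h => ⟨h2 x hbx y ((SimpleGraph.mem_neighborFinset _ _ _).2 h), h⟩⟩
      rw [this]
  have hC : ∑ x ∈ s, ∑ y ∈ G.neighborFinset x, a x * b y
      = ∑ x ∈ s, ∑ y ∈ s, (if G.Adj x y then a x * b y else 0) := by
    refine Finset.sum_congr rfl fun x _ => ?_
    rw [Finset.sum_ite, Finset.sum_const_zero, add_zero]
    refine (Finset.sum_subset ?_ ?_).symm
    · intro y hy
      simp only [Finset.mem_filter] at hy
      exact (SimpleGraph.mem_neighborFinset _ _ _).2 hy.2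
    · intro y hy hys
      have hadj : G.Adj x y := (SimpleGraph.mem_neighborFinset _ _ _).1 hy
      by_cases hby : b y = 0
      · simp [hby]
      · exact absurd (Finset.mem_filter.2 ⟨h1 y hby, hadj⟩) hys
  rw [hB, hC, Finset.sum_comm]
  refine Finset.sum_congr rfl fun x _ => Finset.sum_congr rfl fun y _ => ?_
  by_cases h : G.Adj x y
  · rw [if_pos h, if_pos (G.adj_symm h)]
  · rw [if_neg h, if_neg fun h' => h (G.adj_symm h')]

lemma green_tsum (a b : V → ℂ) (hb : (Function.support b).Finite) :
    ∑' x, graphLap G a x * b x = ∑' x, a x * graphLap G b x := by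
  classical
  set s : Finset V := hb.toFinset ∪ hb.toFinset.biUnion (fun x => G.neighborFinset x) with hs
  have hmem : ∀ x, b x ≠ 0 → x ∈ s := fun x hx =>
    Finset.mem_union_left _ (hb.mem_toFinset.2 hx)
  have hmem2 : ∀ x, b x ≠ 0 → ∀ y ∈ G.neighborFinset x, y ∈ s := fun x hx y hy =>
    Finset.mem_union_right _ (Finset.mem_biUnion.2 ⟨x, hb.mem_toFinset.2 hx, hy⟩)
  have h1 : ∑' x, graphLap G a x * b x = ∑ x ∈ s, graphLap G a x * b x := by
    refine tsum_eq_sum fun x hx => ?_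
    have : b x = 0 := by by_contra h; exact hx (hmem x h)
    simp [this]
  have h2 : ∑' x, a x * graphLap G b x = ∑ x ∈ s, a x * graphLap G b x := by
    refine tsum_eq_sum fun x hx => ?_
    have hbx : b x = 0 := by by_contra h; exact hx (hmem x h)
    have : graphLap G b x = 0 := by
      refine Finset.sum_eq_zero fun y hy => ?_
      have hby : b y = 0 := by
        by_contra h
        exact hx (hmem2 y h x ((SimpleGraph.mem_neighborFinset _ _ _).2
          (G.adj_symm ((SimpleGraph.mem_neighborFinset _ _ _).1 hy))))
      rw [hbx, hby, sub_zero]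
    simp [this]
  rw [h1, h2]
  exact green_finset G a b s hmem hmem2

section lpPart
open scoped ComplexConjugate Classical ENNReal
local notation "⟪" x ", " y "⟫" => @inner ℂ _ _ x y

lemma memℓp_of_finite {f : V → ℂ} (hf : (Function.support f).Finite) :
    Memℓp f 2 := (memℓp_zero hf).of_exponent_ge (by norm_num)

noncomputable def dirac (x : V) : lp (fun _ : V => ℂ) 2 :=
  ⟨fun y => if y = x then 1 else 0,
    memℓp_of_finite (Set.Finite.subset (Set.finite_singleton x)
      (fun y hy => by by_contra h; exact hy (if_neg h)))⟩

lemma dirac_apply (x y : V) : (dirac x : V → ℂ) y = if y = x then 1 else 0 := rfl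

lemma inner_eq (F W : lp (fun _ : V => ℂ) 2) : ⟪F, W⟫ = ∑' x, conj (F x) * W x := by
  rw [lp.inner_eq_tsum]
  exact tsum_congr fun x => RCLike.inner_apply' _ _

lemma inner_dirac_right (F : lp (fun _ : V => ℂ) 2) (x : V) : ⟪F, dirac x⟫ = conj (F x) := by
  rw [inner_eq]
  rw [tsum_eq_single x]
  · simp [dirac_apply]
  · intro y hy
    simp [dirac_apply, hy]

lemma inner_dirac_left (F : lp (fun _ : V => ℂ) 2) (x : V) : ⟪dirac x, F⟫ = F x := by
  rw [inner_eq]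
  rw [tsum_eq_single x]
  · simp [dirac_apply]
  · intro y hy
    simp [dirac_apply, hy]

lemma eigen {c : ℂ} (hre : c.re = 0) (hc : c ≠ 0) (u : lp (fun _ : V => ℂ) 2)
    (heq : ∀ x, graphLap G (u : V → ℂ) x = c * u x) : u = 0 := by
  classical
  by_contra hu
  have hex : ∃ x₁, (u : V → ℂ) x₁ ≠ 0 := by
    by_contra h
    push_neg at h
    exact hu (Subtype.ext (funext fun x => h x))
  obtain ⟨x₁, hx₁⟩ := hex
  have hsum : Summable fun x => ‖(u : V → ℂ) x‖ ^ (2 : ℝ≥0∞).toReal :=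
    (lp.memℓp u).summable (by norm_num)
  have hsum2 : Summable fun x => ‖(u : V → ℂ) x‖ ^ (2 : ℕ) := by
    convert hsum using 2 with x
    rw [show ((2:ℝ≥0∞).toReal) = (2:ℝ) by norm_num, ← Real.rpow_natCast]
    norm_num
  have hx₁pos : (0:ℝ) < ‖(u : V → ℂ) x₁‖ ^ 2 := pow_pos (norm_pos_iff.2 hx₁) 2
  have hfin : {x | ¬ (‖(u : V → ℂ) x‖ ^ 2 < ‖(u : V → ℂ) x₁‖ ^ 2)}.Finite := by
    have := hsum2.tendsto_cofinite_zero.eventually (gt_mem_nhds hx₁pos)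
    simpa [Filter.eventually_cofinite] using this
  set t := hfin.toFinset with ht
  have hx₁t : x₁ ∈ t := by
    rw [Set.Finite.mem_toFinset]
    simp
  obtain ⟨x₀, hx₀t, hx₀max⟩ := t.exists_max_image (fun x => ‖(u : V → ℂ) x‖) ⟨x₁, hx₁t⟩
  have hmax : ∀ x, ‖(u : V → ℂ) x‖ ≤ ‖(u : V → ℂ) x₀‖ := by
    intro x
    by_cases hx : x ∈ t
    · exact hx₀max x hx
    · rw [Set.Finite.mem_toFinset, Set.mem_setOf_eq, not_not] at hx
      have h1 : ‖(u : V → ℂ) x‖ ^ 2 < ‖(u : V → ℂ) x₁‖ ^ 2 := hx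
      have h2 := hx₀max x₁ hx₁t
      nlinarith [norm_nonneg ((u : V → ℂ) x), norm_nonneg ((u : V → ℂ) x₁)]
  have hpos : (0:ℝ) < ‖(u : V → ℂ) x₀‖ := lt_of_lt_of_le (norm_pos_iff.2 hx₁) (hmax x₁)
  -- the eigen equation at x₀
  set d : ℕ := (G.neighborFinset x₀).card with hd
  have hkey : ∑ y ∈ G.neighborFinset x₀, (u : V → ℂ) y = ((d:ℂ) - c) * (u : V → ℂ) x₀ := by
    have h0 := heq x₀
    rw [graphLap, Finset.sum_sub_distrib, Finset.sum_const, ← hd, nsmul_eq_mul] at h0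
    linear_combination -h0
  have hnorm : ‖(d:ℂ) - c‖ * ‖(u : V → ℂ) x₀‖ ≤ (d:ℝ) * ‖(u : V → ℂ) x₀‖ := by
    rw [← norm_mul, ← hkey]
    calc ‖∑ y ∈ G.neighborFinset x₀, (u : V → ℂ) y‖
        ≤ ∑ y ∈ G.neighborFinset x₀, ‖(u : V → ℂ) y‖ := norm_sum_le _ _
      _ ≤ ∑ _y ∈ G.neighborFinset x₀, ‖(u : V → ℂ) x₀‖ :=
          Finset.sum_le_sum fun y _ => hmax y
      _ = (d:ℝ) * ‖(u : V → ℂ) x₀‖ := by rw [Finset.sum_const, ← hd, nsmul_eq_mul]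
  have hle : ‖(d:ℂ) - c‖ ≤ (d:ℝ) := le_of_mul_le_mul_right (by linarith [hnorm]) hpos
  have him : c.im ≠ 0 := by
    intro h
    exact hc (Complex.ext hre h)
  have hsq : ‖(d:ℂ) - c‖ ^ 2 = (d:ℝ)^2 + c.im^2 := by
    rw [Complex.sq_norm, Complex.normSq_apply]
    simp [hre]
    ring
  have him2 : (0:ℝ) < c.im ^ 2 := by
    have := abs_pos.2 him
    calc (0:ℝ) < |c.im| ^ 2 := pow_pos this 2
      _ = c.im ^ 2 := sq_abs c.im
  nlinarith [norm_nonneg ((d:ℂ) - c), Nat.cast_nonneg (α := ℝ) d, him2, hle, hsq]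

lemma green_conj (w f : V → ℂ) (hf : (Function.support f).Finite) :
    ∑' x, conj (graphLap G w x) * f x = ∑' x, conj (w x) * graphLap G f x := by
  have h := green_tsum G (fun x => conj (w x)) f hf
  simpa only [graphLap_conj] using h

lemma green_conj' (f v : V → ℂ) (hf : (Function.support f).Finite) :
    ∑' x, conj (graphLap G f x) * v x = ∑' x, conj (f x) * graphLap G v x := by
  have hf' : (Function.support fun x => conj (f x)).Finite := by
    refine hf.subset fun x hx => ?_
    simp only [Function.mem_support] at hx ⊢
    intro h; exact hx (by rw [h, map_zero])
  have h := green_tsum G v (fun x => conj (f x)) hf'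
  simp only [graphLap_conj] at h
  calc ∑' x, conj (graphLap G f x) * v x
      = ∑' x, v x * conj (graphLap G f x) := tsum_congr fun x => mul_comm _ _
    _ = ∑' x, graphLap G v x * conj (f x) := h.symm
    _ = ∑' x, conj (f x) * graphLap G v x := tsum_congr fun x => mul_comm _ _

lemma graphLap_sub (f g : V → ℂ) :
    graphLap G (f - g) = graphLap G f - graphLap G g := by
  funext x
  simp only [graphLap, Pi.sub_apply, ← Finset.sum_sub_distrib]
  exact Finset.sum_congr rfl fun y _ => by ring

lemma dirac_mem (x : V) : dirac x ∈ ccSubmodule V := by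
  show (Function.support ((dirac x : lp (fun _ : V => ℂ) 2) : V → ℂ)).Finite
  refine (Set.finite_singleton x).subset fun y hy => ?_
  by_contra h
  exact hy (if_neg h)

lemma cc_dense : Dense ((ccSubmodule V : Submodule ℂ (lp (fun _ : V => ℂ) 2)) :
    Set (lp (fun _ : V => ℂ) 2)) := by
  rw [Submodule.dense_iff_topologicalClosure_eq_top,
    Submodule.topologicalClosure_eq_top_iff, Submodule.eq_bot_iff]
  intro w hw
  have hx : ∀ x : V, (w : V → ℂ) x = 0 := by
    intro x
    have h := (Submodule.mem_orthogonal _ w).1 hw (dirac x) (dirac_mem x)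
    rwa [inner_dirac_left] at h
  refine lp.ext (funext fun x => ?_)
  rw [hx x, lp.coeFn_zero, Pi.zero_apply]

lemma minimalLaplacian_apply (f : (minimalLaplacian G).domain) :
    ((minimalLaplacian G f : lp (fun _ : V => ℂ) 2) : V → ℂ)
      = graphLap G ((f : lp (fun _ : V => ℂ) 2) : V → ℂ) := rfl

lemma inner_T_right (w : lp (fun _ : V => ℂ) 2) (f : (minimalLaplacian G).domain) :
    ⟪w, minimalLaplacian G f⟫
      = ∑' x, conj (graphLap G (w : V → ℂ) x) * ((f : lp (fun _ : V => ℂ) 2) : V → ℂ) x := by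
  rw [inner_eq]
  simp only [minimalLaplacian_apply]
  exact (green_conj G (w : V → ℂ) _ f.2).symm

lemma inner_T_left (f : (minimalLaplacian G).domain) (w : lp (fun _ : V => ℂ) 2) :
    ⟪minimalLaplacian G f, w⟫
      = ∑' x, conj (((f : lp (fun _ : V => ℂ) 2) : V → ℂ) x) * graphLap G (w : V → ℂ) x := by
  rw [inner_eq]
  simp only [minimalLaplacian_apply]
  exact green_conj' G _ _ f.2

lemma T_isFormalAdjoint : (minimalLaplacian G).IsFormalAdjoint (minimalLaplacian G) := by
  intro f g
  rw [inner_T_left, inner_eq]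
  simp only [minimalLaplacian_apply]

noncomputable def Amap : ↥((minimalLaplacian G).domain) →ₗ[ℂ] lp (fun _ : V => ℂ) 2 :=
  (minimalLaplacian G).toFun - Complex.I • ((minimalLaplacian G).domain).subtype

lemma Amap_apply (f : ↥(ccSubmodule V)) :
    Amap G f = minimalLaplacian G f - Complex.I • (f : lp (fun _ : V => ℂ) 2) := rfl

lemma normA_lower (f : ↥(ccSubmodule V)) :
    ‖(f : lp (fun _ : V => ℂ) 2)‖ ≤ ‖Amap G f‖ := by
  have hsymm : ⟪minimalLaplacian G f, (f : lp (fun _ : V => ℂ) 2)⟫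
      = ⟪(f : lp (fun _ : V => ℂ) 2), minimalLaplacian G f⟫ := T_isFormalAdjoint G f f
  have him : (⟪minimalLaplacian G f, (f : lp (fun _ : V => ℂ) 2)⟫ : ℂ).im = 0 := by
    have h1 : conj (⟪minimalLaplacian G f, (f : lp (fun _ : V => ℂ) 2)⟫ : ℂ)
        = ⟪minimalLaplacian G f, (f : lp (fun _ : V => ℂ) 2)⟫ := by
      rw [inner_conj_symm, hsymm]
    exact Complex.conj_eq_iff_im.mp h1
  have hre : RCLike.re (⟪minimalLaplacian G f,
      Complex.I • (f : lp (fun _ : V => ℂ) 2)⟫ : ℂ) = 0 := by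
    rw [inner_smul_right]
    simp [Complex.mul_re, him]
  have hsq := norm_sub_sq (𝕜 := ℂ) (minimalLaplacian G f)
    (Complex.I • (f : lp (fun _ : V => ℂ) 2))
  rw [hre] at hsq
  have hIf : ‖Complex.I • (f : lp (fun _ : V => ℂ) 2)‖ = ‖(f : lp (fun _ : V => ℂ) 2)‖ := by
    rw [norm_smul, Complex.norm_I, one_mul]
  rw [hIf] at hsq
  have h2 : ‖(f : lp (fun _ : V => ℂ) 2)‖ ^ 2 ≤ ‖Amap G f‖ ^ 2 := by
    rw [Amap_apply, hsq]
    nlinarith [norm_nonneg (minimalLaplacian G f)]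
  nlinarith [norm_nonneg (Amap G f), norm_nonneg ((f : lp (fun _ : V => ℂ) 2))]

lemma rangeA_dense :
    Dense ((LinearMap.range (Amap G) : Submodule ℂ (lp (fun _ : V => ℂ) 2)) :
      Set (lp (fun _ : V => ℂ) 2)) := by
  rw [Submodule.dense_iff_topologicalClosure_eq_top,
    Submodule.topologicalClosure_eq_top_iff, Submodule.eq_bot_iff]
  intro w hw
  have hW : ∀ x : V, graphLap G (w : V → ℂ) x = (-Complex.I) * (w : V → ℂ) x := by
    intro x
    have hx := (Submodule.mem_orthogonal _ w).1 hw (Amap G ⟨dirac x, dirac_mem x⟩)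
      (LinearMap.mem_range_self _ _)
    have hx' : ⟪w, Amap G ⟨dirac x, dirac_mem x⟩⟫ = 0 := by
      rw [← inner_conj_symm, hx, map_zero]
    erw [Amap_apply, inner_sub_right, inner_smul_right, inner_T_right] at hx'
    have h1 : ∑' y, conj (graphLap G (w : V → ℂ) y)
        * (((⟨dirac x, dirac_mem x⟩ : ↥(ccSubmodule V)) : lp (fun _ : V => ℂ) 2) : V → ℂ) y
        = conj (graphLap G (w : V → ℂ) x) := by
      rw [tsum_eq_single x]
      · simp [dirac_apply]
      · intro y hy
        simp [dirac_apply, hy]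
    rw [h1] at hx'
    have h2 : (⟪w, ((⟨dirac x, dirac_mem x⟩ : ↥(ccSubmodule V)) :
        lp (fun _ : V => ℂ) 2)⟫ : ℂ) = conj ((w : V → ℂ) x) := inner_dirac_right w x
    rw [h2, sub_eq_zero] at hx'
    have := congrArg conj hx'
    simpa [mul_comm] using this
  have : w = 0 := by
    refine eigen G (c := -Complex.I) (by simp) (by simp [Complex.ext_iff]) w hW
  exact this

lemma tendsto_eval {s : ℕ → lp (fun _ : V => ℂ) 2} {L : lp (fun _ : V => ℂ) 2}
    (hs : Filter.Tendsto s Filter.atTop (nhds L)) (x : V) :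
    Filter.Tendsto (fun n => (s n : V → ℂ) x) Filter.atTop (nhds ((L : V → ℂ) x)) := by
  have hle : ∀ n, dist ((s n : V → ℂ) x) ((L : V → ℂ) x) ≤ dist (s n) L := by
    intro n
    rw [dist_eq_norm, dist_eq_norm]
    have h := lp.norm_apply_le_norm (by norm_num : (2 : ℝ≥0∞) ≠ 0) (s n - L) x
    simpa [lp.coeFn_sub] using h
  rw [tendsto_iff_dist_tendsto_zero]
  exact squeeze_zero (fun n => dist_nonneg) hle
    (tendsto_iff_dist_tendsto_zero.1 hs)

lemma adjoint_symm (u v : lp (fun _ : V => ℂ) 2)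
    (hu : Memℓp (graphLap G (u : V → ℂ)) 2) (hv : Memℓp (graphLap G (v : V → ℂ)) 2) :
    ⟪(⟨graphLap G (u : V → ℂ), hu⟩ : lp (fun _ : V => ℂ) 2), v⟫
      = ⟪u, (⟨graphLap G (v : V → ℂ), hv⟩ : lp (fun _ : V => ℂ) 2)⟫ := by
  classical
  set Lu : lp (fun _ : V => ℂ) 2 := ⟨graphLap G (u : V → ℂ), hu⟩ with hLu
  set Lv : lp (fun _ : V => ℂ) 2 := ⟨graphLap G (v : V → ℂ), hv⟩ with hLv
  set h : lp (fun _ : V => ℂ) 2 := Lu - Complex.I • u with hh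
  -- approximate h by the range of Amap
  have hA : ∀ n : ℕ, ∃ r : ↥((minimalLaplacian G).domain), dist h (Amap G r) < 1 / (n + 1) := by
    intro n
    have hpos : (0:ℝ) < 1 / (n + 1) := by positivity
    obtain ⟨y, hy1, hy2⟩ := Metric.dense_iff.1 (rangeA_dense G) h (1 / (n + 1)) hpos
    obtain ⟨r, hr⟩ := hy2
    exact ⟨r, by rw [dist_comm]; simpa [hr] using hy1⟩
  choose seq hseq using hA
  have htend : Filter.Tendsto (fun n => Amap G (seq n)) Filter.atTop (nhds h) := by
    rw [tendsto_iff_dist_tendsto_zero]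
    refine squeeze_zero (fun n => dist_nonneg) (fun n => ?_)
      tendsto_one_div_add_atTop_nhds_zero_nat
    rw [dist_comm]
    exact (hseq n).le
  have hcauchy : CauchySeq (fun n => ((seq n : lp (fun _ : V => ℂ) 2))) := by
    rw [Metric.cauchySeq_iff]
    have hAc := htend.cauchySeq
    rw [Metric.cauchySeq_iff] at hAc
    intro ε hε
    obtain ⟨N, hN⟩ := hAc ε hε
    refine ⟨N, fun m hm n hn => ?_⟩
    have h1 : dist ((seq m : lp (fun _ : V => ℂ) 2)) ((seq n : lp (fun _ : V => ℂ) 2))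
        ≤ dist (Amap G (seq m)) (Amap G (seq n)) := by
      rw [dist_eq_norm, dist_eq_norm, ← map_sub]
      have h2 := normA_lower G (seq m - seq n)
      simpa using h2
    exact lt_of_le_of_lt h1 (hN m hm n hn)
  obtain ⟨g, hg⟩ := cauchySeq_tendsto_of_complete hcauchy
  -- identify the limit of the Laplacians
  have hTlim : Filter.Tendsto (fun n => minimalLaplacian G (seq n)) Filter.atTop
      (nhds (h + Complex.I • g)) := by
    have heq : (fun n => minimalLaplacian G (seq n))
        = fun n => Amap G (seq n) + Complex.I • ((seq n : lp (fun _ : V => ℂ) 2)) := by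
      funext n
      erw [Amap_apply]
      abel
    rw [heq]
    exact htend.add (hg.const_smul _)
  have hglap : ∀ x, graphLap G (g : V → ℂ) x = ((h + Complex.I • g : lp (fun _ : V => ℂ) 2) : V → ℂ) x := by
    intro x
    have e1 : Filter.Tendsto (fun n => graphLap G ((seq n : lp (fun _ : V => ℂ) 2) : V → ℂ) x)
        Filter.atTop (nhds (graphLap G (g : V → ℂ) x)) := by
      simp only [graphLap]
      exact tendsto_finset_sum _ fun y _ => (tendsto_eval hg x).sub (tendsto_eval hg y)
    have e2 : Filter.Tendsto (fun n => graphLap G ((seq n : lp (fun _ : V => ℂ) 2) : V → ℂ) x)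
        Filter.atTop (nhds (((h + Complex.I • g : lp (fun _ : V => ℂ) 2) : V → ℂ) x)) := by
      have := tendsto_eval hTlim x
      simpa only [minimalLaplacian_apply] using this
    exact tendsto_nhds_unique e1 e2
  -- conclude g = u
  have hgu : g = u := by
    have hw : ∀ x, graphLap G ((g - u : lp (fun _ : V => ℂ) 2) : V → ℂ) x
        = Complex.I * ((g - u : lp (fun _ : V => ℂ) 2) : V → ℂ) x := by
      intro x
      have hsub : ((g - u : lp (fun _ : V => ℂ) 2) : V → ℂ) = (g : V → ℂ) - (u : V → ℂ) :=
        lp.coeFn_sub g u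
      rw [hsub, graphLap_sub]
      have h1 := hglap x
      have h2 : ((h + Complex.I • g : lp (fun _ : V => ℂ) 2) : V → ℂ) x
          = graphLap G (u : V → ℂ) x - Complex.I * (u : V → ℂ) x + Complex.I * (g : V → ℂ) x := by
        simp only [hh, hLu, lp.coeFn_add, lp.coeFn_sub, lp.coeFn_smul, Pi.add_apply,
          Pi.sub_apply, Pi.smul_apply, smul_eq_mul]
      simp only [Pi.sub_apply]
      rw [h1, h2]
      ring
    have := eigen G (c := Complex.I) (by simp) Complex.I_ne_zero (g - u) hw
    exact sub_eq_zero.mp this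
  rw [hgu] at hg
  -- limit of T (seq n) is Lu
  have hTu : Filter.Tendsto (fun n => minimalLaplacian G (seq n)) Filter.atTop (nhds Lu) := by
    have : h + Complex.I • u = Lu := by rw [hh]; abel
    rw [hgu] at hTlim
    rwa [this] at hTlim
  -- pass to the limit in Green's formula
  have c1 : Filter.Tendsto (fun n => (⟪minimalLaplacian G (seq n), v⟫ : ℂ)) Filter.atTop
      (nhds ⟪Lu, v⟫) := hTu.inner tendsto_const_nhds
  have c2 : (fun n => (⟪minimalLaplacian G (seq n), v⟫ : ℂ))
      = fun n => ⟪((seq n : lp (fun _ : V => ℂ) 2)), Lv⟫ := by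
    funext n
    rw [inner_T_left, inner_eq]
  have c3 : Filter.Tendsto (fun n => (⟪((seq n : lp (fun _ : V => ℂ) 2)), Lv⟫ : ℂ)) Filter.atTop
      (nhds ⟪u, Lv⟫) := hg.inner tendsto_const_nhds
  rw [c2] at c1
  exact tendsto_nhds_unique c1 c3

lemma adj_mem (w : lp (fun _ : V => ℂ) 2) (hw : Memℓp (graphLap G (w : V → ℂ)) 2) :
    w ∈ ((minimalLaplacian G).adjoint).domain := by
  refine LinearPMap.mem_adjoint_domain_of_exists _
    ⟨(⟨graphLap G (w : V → ℂ), hw⟩ : lp (fun _ : V => ℂ) 2), fun f => ?_⟩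
  rw [inner_T_right, inner_eq]

lemma adj_lap (w : ((minimalLaplacian G).adjoint).domain) (x : V) :
    (((minimalLaplacian G).adjoint w : lp (fun _ : V => ℂ) 2) : V → ℂ) x
      = graphLap G ((w : lp (fun _ : V => ℂ) 2) : V → ℂ) x := by
  have hFA := LinearPMap.adjoint_isFormalAdjoint (T := minimalLaplacian G) cc_dense
  have h := hFA w ⟨dirac x, dirac_mem x⟩
  rw [inner_T_right] at h
  have h1 : ∑' y, conj (graphLap G ((w : lp (fun _ : V => ℂ) 2) : V → ℂ) y)
      * (((⟨dirac x, dirac_mem x⟩ : ↥(ccSubmodule V)) : lp (fun _ : V => ℂ) 2) : V → ℂ) y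
      = conj (graphLap G ((w : lp (fun _ : V => ℂ) 2) : V → ℂ) x) := by
    rw [tsum_eq_single x]
    · simp [dirac_apply]
    · intro y hy
      simp [dirac_apply, hy]
  have h2 : (⟪(minimalLaplacian G).adjoint w,
      (((⟨dirac x, dirac_mem x⟩ : ↥(ccSubmodule V)) : lp (fun _ : V => ℂ) 2))⟫ : ℂ)
      = conj ((((minimalLaplacian G).adjoint w : lp (fun _ : V => ℂ) 2) : V → ℂ) x) :=
    inner_dirac_right _ x
  rw [h1, h2] at h
  exact (starRingEnd ℂ).injective h

lemma adj_memℓp (w : ((minimalLaplacian G).adjoint).domain) :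
    Memℓp (graphLap G ((w : lp (fun _ : V => ℂ) 2) : V → ℂ)) 2 := by
  have h : graphLap G ((w : lp (fun _ : V => ℂ) 2) : V → ℂ)
      = (((minimalLaplacian G).adjoint w : lp (fun _ : V => ℂ) 2) : V → ℂ) :=
    funext fun x => (adj_lap G w x).symm
  rw [h]
  exact lp.memℓp _

lemma adj_isFormalAdjoint_self :
    ((minimalLaplacian G).adjoint).IsFormalAdjoint ((minimalLaplacian G).adjoint) := by
  intro w₁ w₂
  have e1 : (minimalLaplacian G).adjoint w₁
      = (⟨graphLap G ((w₁ : lp (fun _ : V => ℂ) 2) : V → ℂ), adj_memℓp G w₁⟩ :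
          lp (fun _ : V => ℂ) 2) :=
    lp.ext (funext fun x => adj_lap G w₁ x)
  have e2 : (minimalLaplacian G).adjoint w₂
      = (⟨graphLap G ((w₂ : lp (fun _ : V => ℂ) 2) : V → ℂ), adj_memℓp G w₂⟩ :
          lp (fun _ : V => ℂ) 2) :=
    lp.ext (funext fun x => adj_lap G w₂ x)
  rw [e1, e2]
  exact adjoint_symm G _ _ _ _

lemma adj_dom_dense :
    Dense (((((minimalLaplacian G).adjoint).domain : Submodule ℂ (lp (fun _ : V => ℂ) 2))) :
      Set (lp (fun _ : V => ℂ) 2)) := by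
  refine Dense.mono ?_ (cc_dense (V := V))
  intro w hw
  exact adj_mem G w (memℓp_of_finite (graphLap_support_finite G hw))

lemma adjoint_antitone {S T : lp (fun _ : V => ℂ) 2 →ₗ.[ℂ] lp (fun _ : V => ℂ) 2}
    (hS : Dense (S.domain : Set (lp (fun _ : V => ℂ) 2)))
    (hT : Dense (T.domain : Set (lp (fun _ : V => ℂ) 2)))
    (h : S ≤ T) : T.adjoint ≤ S.adjoint := by
  constructor
  · intro w hw
    refine LinearPMap.mem_adjoint_domain_of_exists _ ⟨T.adjoint ⟨w, hw⟩, fun f => ?_⟩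
    have h2 := LinearPMap.adjoint_isFormalAdjoint hT ⟨w, hw⟩ (Submodule.inclusion h.1 f)
    rw [← LinearPMap.apply_comp_inclusion h f] at h2
    exact h2
  · intro x y hxy
    refine (LinearPMap.adjoint_apply_eq hS y fun f => ?_).symm
    have h2 := LinearPMap.adjoint_isFormalAdjoint hT x (Submodule.inclusion h.1 f)
    rw [← LinearPMap.apply_comp_inclusion h f] at h2
    rw [show ((x : lp (fun _ : V => ℂ) 2)) = (y : lp (fun _ : V => ℂ) 2) from hxy] at h2
    exact h2

end lpPart
end aux

/-- **Essential self-adjointness of the physical Laplacian.**  On a connected,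
countable, locally finite graph, the minimal Laplacian `Δ_m : C_c(V) → ℓ²(V)` has a
unique self-adjoint extension (where `star` of a `LinearPMap` is its adjoint). -/
theorem minimalLaplacian_essentially_selfAdjoint
    [Countable V] (hG : G.Connected) :
    ∃! S : lp (fun _ : V => ℂ) 2 →ₗ.[ℂ] lp (fun _ : V => ℂ) 2,
      minimalLaplacian G ≤ S ∧ IsSelfAdjoint S := by
  have hdense : Dense (((minimalLaplacian G).domain :
      Submodule ℂ (lp (fun _ : V => ℂ) 2)) : Set (lp (fun _ : V => ℂ) 2)) := cc_dense (V := V)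
  have hTle : minimalLaplacian G ≤ (minimalLaplacian G).adjoint :=
    LinearPMap.IsFormalAdjoint.le_adjoint hdense (T_isFormalAdjoint G)
  have hsa : IsSelfAdjoint ((minimalLaplacian G).adjoint) := by
    rw [LinearPMap.isSelfAdjoint_def]
    refine le_antisymm ?_ ?_
    · exact adjoint_antitone hdense (adj_dom_dense G) hTle
    · exact LinearPMap.IsFormalAdjoint.le_adjoint (adj_dom_dense G) (adj_isFormalAdjoint_self G)
  refine ⟨(minimalLaplacian G).adjoint, ⟨hTle, hsa⟩, ?_⟩
  rintro S' ⟨hle, hsa'⟩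
  have hd' : Dense (S'.domain : Set (lp (fun _ : V => ℂ) 2)) := hsa'.dense_domain
  have h1 : S' ≤ (minimalLaplacian G).adjoint := by
    have h := adjoint_antitone hdense hd' hle
    rwa [LinearPMap.isSelfAdjoint_def.mp hsa'] at h
  have h2 : (minimalLaplacian G).adjoint ≤ S' := by
    have h := adjoint_antitone hd' (adj_dom_dense G) h1
    rw [LinearPMap.isSelfAdjoint_def.mp hsa'] at h
    calc (minimalLaplacian G).adjoint
        ≤ ((minimalLaplacian G).adjoint).adjoint :=
          LinearPMap.IsFormalAdjoint.le_adjoint (adj_dom_dense G) (adj_isFormalAdjoint_self G)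
      _ ≤ S' := h
  exact le_antisymm h1 h2

end
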